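/- The closure Cl(G) of a ρdf graph G is unique and its size is Θ(|G|²): there is a constant c such that |Cl(G)| ≤ c·|G|² for every ρdf graph G, and for the family of graphs G_n = {⟨p_1,sp,p_2⟩, ⟨p_2,sp,p_3⟩, …, ⟨p_n,sp,p_{n+1}⟩} (with pairwise distinct URIs p_i) the closure contains the triple ⟨p_i,sp,p_j⟩ for all 1 ≤ i < j ≤ n+1, hence |Cl(G_n)| = Ω(n²). -/
import Mathlib


/-!
Formalization of ρdf and ρdf⊥¬ (triple languages, semantics, deductive systems),
following Muñoz et al. and "Extending RDFS with negative statements".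
-/

namespace Rho

/-- URI references: the ρdf⊥¬ vocabulary elements, atomic resources `res false n`
together with their negations `res true n` (negation flips the Boolean, so ¬¬r = r),
and universal-quantification resources `star b n` = ★_{res b n}. -/
inductive URI : Type where
  | sp | sc | typ | dom | rng | botc | botp
  | res (b : Bool) (n : ℕ)
  | star (b : Bool) (n : ℕ)
deriving DecidableEq

/-- Terms: URIs, blank nodes and literals (pairwise disjoint alphabets). -/
inductive Term : Type where
  | uri (u : URI)
  | blank (n : ℕ)
  | lit (n : ℕ)
deriving DecidableEq

/-- The ρdf vocabulary {sp, sc, type, dom, range}. -/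
def rhoVoc : Set URI := {URI.sp, URI.sc, URI.typ, URI.dom, URI.rng}

/-- The ρdf⊥¬ vocabulary: ρdf plus ⊥c and ⊥p. -/
def botVoc : Set URI := rhoVoc ∪ {URI.botc, URI.botp}

def URI.isStar : URI → Prop
  | URI.star _ _ => True
  | _ => False

def Term.isStar : Term → Prop
  | Term.uri (URI.star _ _) => True
  | _ => False

def Term.isBlank : Term → Prop
  | Term.blank _ => True
  | _ => False

def Term.isLit : Term → Prop
  | Term.lit _ => True
  | _ => False

def Term.isVoc : Term → Prop
  | Term.uri u => u ∈ rhoVoc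
  | _ => False

def Term.isBotVoc : Term → Prop
  | Term.uri u => u ∈ botVoc
  | _ => False

/-- Negation of terms: flips the sign of an atomic/negated resource
(identity on all other terms, where negation is not defined). -/
def negT : Term → Term
  | Term.uri (URI.res b n) => Term.uri (URI.res (!b) n)
  | t => t

/-- An RDF triple ⟨s, p, o⟩ ∈ UBL × U × UBL. -/
structure Triple : Type where
  s : Term
  p : URI
  o : Term
deriving DecidableEq

/-- ρdf triple: subject and object are not in the ρdf vocabulary. -/
def Triple.okRdf (τ : Triple) : Prop := ¬ τ.s.isVoc ∧ ¬ τ.o.isVoc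

/-- ρdf⊥¬ triple: s, o not in the ρdf⊥¬ vocabulary, p not of the form ★_c,
s and o not both of the form ★_c, and if p is in the ρdf⊥¬ vocabulary then
neither s nor o is of the form ★_c. -/
def Triple.okN (τ : Triple) : Prop :=
  ¬ τ.s.isBotVoc ∧ ¬ τ.o.isBotVoc ∧ ¬ τ.p.isStar ∧ ¬ (τ.s.isStar ∧ τ.o.isStar) ∧
    (τ.p ∈ botVoc → ¬ τ.s.isStar ∧ ¬ τ.o.isStar)

/-- A graph is a finite set of triples. -/
abbrev Graph := Finset Triple

/-- A ρdf graph. -/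
def IsRdfGraph (G : Graph) : Prop := ∀ τ ∈ G, τ.okRdf

/-- A ρdf⊥¬ graph. -/
def IsNGraph (G : Graph) : Prop := ∀ τ ∈ G, τ.okN

/-- A ground graph contains no blank nodes. -/
def Ground (G : Graph) : Prop := ∀ τ ∈ G, ¬ τ.s.isBlank ∧ ¬ τ.o.isBlank

/-- No term of the form ★_c occurs in the graph. -/
def StarFree (G : Graph) : Prop := ∀ τ ∈ G, ¬ τ.s.isStar ∧ ¬ τ.o.isStar

/-- The universe of a graph: the set of terms occurring in its triples. -/
def uni (G : Graph) : Set Term := {t | ∃ τ ∈ G, t = τ.s ∨ t = Term.uri τ.p ∨ t = τ.o}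

def rhoVocT : Set Term := Term.uri '' rhoVoc
def botVocT : Set Term := Term.uri '' botVoc

/-- A map: a function on terms preserving URIs and literals. -/
def IsMap (μ : Term → Term) : Prop :=
  (∀ u, μ (Term.uri u) = Term.uri u) ∧ ∀ n, μ (Term.lit n) = Term.lit n

def mapT (μ : Term → Term) (τ : Triple) : Triple := ⟨μ τ.s, τ.p, μ τ.o⟩

def mapG (μ : Term → Term) (G : Graph) : Graph := G.image (mapT μ)

/-! ### ρdf semantics -/

/-- A ρdf interpretation (raw data, with carrier the type of terms; the
interpretation of literals is the identity, as in the paper). -/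
structure Interp : Type where
  ΔR : Set Term
  ΔP : Set Term
  ΔC : Set Term
  ΔL : Set Term
  extP : Term → Set (Term × Term)
  extC : Term → Set Term
  int : Term → Term

def Interp.iv (I : Interp) (e : URI) : Term := I.int (Term.uri e)

/-- `I` is a ρdf interpretation over the vocabulary `V`. -/
structure IsInterp (I : Interp) (V : Set Term) : Prop where
  finR : I.ΔR.Finite
  neR : I.ΔR.Nonempty
  finP : I.ΔP.Finite
  neP : I.ΔP.Nonempty
  finC : I.ΔC.Finite
  neC : I.ΔC.Nonempty
  finL : I.ΔL.Finite
  neL : I.ΔL.Nonempty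
  hCR : I.ΔC ⊆ I.ΔR
  hLR : I.ΔL ⊆ I.ΔR
  hlit : ∀ n, Term.lit n ∈ V → Term.lit n ∈ I.ΔL
  hextP : ∀ p ∈ I.ΔP, I.extP p ⊆ I.ΔR ×ˢ I.ΔR
  hextC : ∀ c ∈ I.ΔC, I.extC c ⊆ I.ΔR
  hint : ∀ t ∈ V, ¬ t.isBlank → I.int t ∈ I.ΔR ∪ I.ΔP
  hintlit : ∀ n, I.int (Term.lit n) = Term.lit n
  hintblank : ∀ n, I.int (Term.blank n) ∈ I.ΔR

/-- `I` is a model of the graph `G` (reflexive-relaxed ρdf semantics). -/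
structure Models (I : Interp) (G : Graph) : Prop where
  interp : IsInterp I (rhoVocT ∪ uni G)
  simple : ∀ τ ∈ G, I.iv τ.p ∈ I.ΔP ∧ (I.int τ.s, I.int τ.o) ∈ I.extP (I.iv τ.p)
  sp_trans : ∀ p q r, p ∈ I.ΔP → q ∈ I.ΔP → r ∈ I.ΔP →
    (p, q) ∈ I.extP (I.iv URI.sp) → (q, r) ∈ I.extP (I.iv URI.sp) →
    (p, r) ∈ I.extP (I.iv URI.sp)
  sp_sub : ∀ p q, (p, q) ∈ I.extP (I.iv URI.sp) →
    p ∈ I.ΔP ∧ q ∈ I.ΔP ∧ I.extP p ⊆ I.extP q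
  sc_trans : ∀ c d e, c ∈ I.ΔC → d ∈ I.ΔC → e ∈ I.ΔC →
    (c, d) ∈ I.extP (I.iv URI.sc) → (d, e) ∈ I.extP (I.iv URI.sc) →
    (c, e) ∈ I.extP (I.iv URI.sc)
  sc_sub : ∀ c d, (c, d) ∈ I.extP (I.iv URI.sc) →
    c ∈ I.ΔC ∧ d ∈ I.ΔC ∧ I.extC c ⊆ I.extC d
  typI1 : ∀ x c, c ∈ I.ΔC → (x ∈ I.extC c ↔ (x, c) ∈ I.extP (I.iv URI.typ))
  typI2 : ∀ p c x y, (p, c) ∈ I.extP (I.iv URI.dom) → (x, y) ∈ I.extP p → x ∈ I.extC c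
  typI3 : ∀ p c x y, (p, c) ∈ I.extP (I.iv URI.rng) → (x, y) ∈ I.extP p → y ∈ I.extC c
  typII1 : ∀ e ∈ rhoVoc, I.iv e ∈ I.ΔP
  typII2 : ∀ p c, (p, c) ∈ I.extP (I.iv URI.dom) → p ∈ I.ΔP ∧ c ∈ I.ΔC
  typII3 : ∀ p c, (p, c) ∈ I.extP (I.iv URI.rng) → p ∈ I.ΔP ∧ c ∈ I.ΔC
  typII4 : ∀ x c, (x, c) ∈ I.extP (I.iv URI.typ) → c ∈ I.ΔC

/-- ρdf entailment. -/
def Entails (G H : Graph) : Prop := ∀ I : Interp, Models I G → Models I H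

/-! ### The ρdf deductive system -/

/-- Instantiations of the ρdf deductive rules (2)-(5): premises / conclusion. -/
inductive RuleInst : Finset Triple → Triple → Prop where
  | sp_trans (a b c : Term) :
      RuleInst {⟨a, URI.sp, b⟩, ⟨b, URI.sp, c⟩} ⟨a, URI.sp, c⟩
  | sp_mono (d e : URI) (x y : Term) :
      RuleInst {⟨Term.uri d, URI.sp, Term.uri e⟩, ⟨x, d, y⟩} ⟨x, e, y⟩
  | sc_trans (a b c : Term) :
      RuleInst {⟨a, URI.sc, b⟩, ⟨b, URI.sc, c⟩} ⟨a, URI.sc, c⟩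
  | sc_mono (a b x : Term) :
      RuleInst {⟨a, URI.sc, b⟩, ⟨x, URI.typ, a⟩} ⟨x, URI.typ, b⟩
  | dom (d : URI) (b x y : Term) :
      RuleInst {⟨Term.uri d, URI.dom, b⟩, ⟨x, d, y⟩} ⟨x, URI.typ, b⟩
  | rng (d : URI) (b x y : Term) :
      RuleInst {⟨Term.uri d, URI.rng, b⟩, ⟨x, d, y⟩} ⟨y, URI.typ, b⟩
  | idom (a b x y : Term) (d : URI) :
      RuleInst {⟨a, URI.dom, b⟩, ⟨Term.uri d, URI.sp, a⟩, ⟨x, d, y⟩} ⟨x, URI.typ, b⟩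
  | irng (a b x y : Term) (d : URI) :
      RuleInst {⟨a, URI.rng, b⟩, ⟨Term.uri d, URI.sp, a⟩, ⟨x, d, y⟩} ⟨y, URI.typ, b⟩

/-- The ρdf rules without the implicit typing rules (5a), (5b). -/
inductive RuleInstCore : Finset Triple → Triple → Prop where
  | sp_trans (a b c : Term) :
      RuleInstCore {⟨a, URI.sp, b⟩, ⟨b, URI.sp, c⟩} ⟨a, URI.sp, c⟩
  | sp_mono (d e : URI) (x y : Term) :
      RuleInstCore {⟨Term.uri d, URI.sp, Term.uri e⟩, ⟨x, d, y⟩} ⟨x, e, y⟩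
  | sc_trans (a b c : Term) :
      RuleInstCore {⟨a, URI.sc, b⟩, ⟨b, URI.sc, c⟩} ⟨a, URI.sc, c⟩
  | sc_mono (a b x : Term) :
      RuleInstCore {⟨a, URI.sc, b⟩, ⟨x, URI.typ, a⟩} ⟨x, URI.typ, b⟩
  | dom (d : URI) (b x y : Term) :
      RuleInstCore {⟨Term.uri d, URI.dom, b⟩, ⟨x, d, y⟩} ⟨x, URI.typ, b⟩
  | rng (d : URI) (b x y : Term) :
      RuleInstCore {⟨Term.uri d, URI.rng, b⟩, ⟨x, d, y⟩} ⟨y, URI.typ, b⟩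

/-- The additional deductive rules of ρdf⊥¬. -/
inductive ExtraRule : Finset Triple → Triple → Prop where
  -- (2c)
  | sp_neg (a b : Bool) (m n : ℕ) :
      ExtraRule {⟨Term.uri (URI.res a m), URI.sp, Term.uri (URI.res b n)⟩}
        ⟨Term.uri (URI.res (!b) n), URI.sp, Term.uri (URI.res (!a) m)⟩
  -- (2d)
  | sp_star_o (x : Term) (d e : URI) (cb : Bool) (cn : ℕ) :
      ExtraRule {⟨x, d, Term.uri (URI.star cb cn)⟩, ⟨Term.uri d, URI.sp, Term.uri e⟩}
        ⟨x, e, Term.uri (URI.star cb cn)⟩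
  -- (2e)
  | sp_star_s (x : Term) (d e : URI) (cb : Bool) (cn : ℕ) :
      ExtraRule {⟨Term.uri (URI.star cb cn), d, x⟩, ⟨Term.uri d, URI.sp, Term.uri e⟩}
        ⟨Term.uri (URI.star cb cn), e, x⟩
  -- (3c)
  | sc_neg (a b : Bool) (m n : ℕ) :
      ExtraRule {⟨Term.uri (URI.res a m), URI.sc, Term.uri (URI.res b n)⟩}
        ⟨Term.uri (URI.res (!b) n), URI.sc, Term.uri (URI.res (!a) m)⟩
  -- (3d)
  | sc_star_o (a : Term) (d : URI) (bb cb : Bool) (bn cn : ℕ) :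
      ExtraRule {⟨a, d, Term.uri (URI.star cb cn)⟩,
                 ⟨Term.uri (URI.res bb bn), URI.sc, Term.uri (URI.res cb cn)⟩}
        ⟨a, d, Term.uri (URI.star bb bn)⟩
  -- (3e)
  | sc_star_s (a : Term) (d : URI) (bb cb : Bool) (bn cn : ℕ) :
      ExtraRule {⟨Term.uri (URI.star cb cn), d, a⟩,
                 ⟨Term.uri (URI.res bb bn), URI.sc, Term.uri (URI.res cb cn)⟩}
        ⟨Term.uri (URI.star bb bn), d, a⟩
  -- (4c)
  | dom_neg (db bb : Bool) (dn bn : ℕ) (x z y : Term) :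
      ExtraRule {⟨Term.uri (URI.res db dn), URI.dom, Term.uri (URI.res bb bn)⟩,
                 ⟨x, URI.typ, Term.uri (URI.res (!bb) bn)⟩,
                 ⟨z, URI.res db dn, y⟩}
        ⟨x, URI.res (!db) dn, y⟩
  -- (4d)
  | rng_neg (db bb : Bool) (dn bn : ℕ) (x z y : Term) :
      ExtraRule {⟨Term.uri (URI.res db dn), URI.rng, Term.uri (URI.res bb bn)⟩,
                 ⟨y, URI.typ, Term.uri (URI.res (!bb) bn)⟩,
                 ⟨x, URI.res db dn, z⟩}
        ⟨x, URI.res (!db) dn, y⟩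
  -- (4e)
  | star_inst_o (a y : Term) (d : URI) (cb : Bool) (cn : ℕ) :
      ExtraRule {⟨a, d, Term.uri (URI.star cb cn)⟩, ⟨y, URI.typ, Term.uri (URI.res cb cn)⟩}
        ⟨a, d, y⟩
  -- (4f)
  | star_inst_s (b x : Term) (d : URI) (cb : Bool) (cn : ℕ) :
      ExtraRule {⟨Term.uri (URI.star cb cn), d, b⟩, ⟨x, URI.typ, Term.uri (URI.res cb cn)⟩}
        ⟨x, d, b⟩
  -- (4g)
  | star_conflict_o (a y : Term) (db cb : Bool) (dn cn : ℕ) :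
      ExtraRule {⟨a, URI.res db dn, Term.uri (URI.star cb cn)⟩, ⟨a, URI.res (!db) dn, y⟩}
        ⟨y, URI.typ, Term.uri (URI.res (!cb) cn)⟩
  -- (4h)
  | star_conflict_s (b x : Term) (db cb : Bool) (dn cn : ℕ) :
      ExtraRule {⟨Term.uri (URI.star cb cn), URI.res db dn, b⟩, ⟨x, URI.res (!db) dn, b⟩}
        ⟨x, URI.typ, Term.uri (URI.res (!cb) cn)⟩
  -- (6a)
  | botc_symm (a b : Term) : ExtraRule {⟨a, URI.botc, b⟩} ⟨b, URI.botc, a⟩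
  -- (6b)
  | botc_subtrans (a b c : Term) :
      ExtraRule {⟨a, URI.botc, b⟩, ⟨c, URI.sc, a⟩} ⟨c, URI.botc, b⟩
  -- (6c)
  | botc_exh (a b : Term) : ExtraRule {⟨a, URI.botc, a⟩} ⟨a, URI.botc, b⟩
  -- (6d)
  | botc_sc (a : Term) (b : Bool) (n : ℕ) :
      ExtraRule {⟨a, URI.botc, Term.uri (URI.res b n)⟩} ⟨a, URI.sc, Term.uri (URI.res (!b) n)⟩
  -- (6e)
  | sc_botc (a : Term) (b : Bool) (n : ℕ) :
      ExtraRule {⟨a, URI.sc, Term.uri (URI.res b n)⟩} ⟨a, URI.botc, Term.uri (URI.res (!b) n)⟩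
  -- (7a)
  | botp_symm (a b : Term) : ExtraRule {⟨a, URI.botp, b⟩} ⟨b, URI.botp, a⟩
  -- (7b)
  | botp_subtrans (a b c : Term) :
      ExtraRule {⟨a, URI.botp, b⟩, ⟨c, URI.sp, a⟩} ⟨c, URI.botp, b⟩
  -- (7c)
  | botp_exh (a b : Term) : ExtraRule {⟨a, URI.botp, a⟩} ⟨a, URI.botp, b⟩
  -- (7d)
  | botp_sp (a : Term) (b : Bool) (n : ℕ) :
      ExtraRule {⟨a, URI.botp, Term.uri (URI.res b n)⟩} ⟨a, URI.sp, Term.uri (URI.res (!b) n)⟩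
  -- (7e)
  | sp_botp (a : Term) (b : Bool) (n : ℕ) :
      ExtraRule {⟨a, URI.sp, Term.uri (URI.res b n)⟩} ⟨a, URI.botp, Term.uri (URI.res (!b) n)⟩
  -- (8a)
  | cross_dom (a b c d : Term) :
      ExtraRule {⟨a, URI.dom, c⟩, ⟨b, URI.dom, d⟩, ⟨c, URI.botc, d⟩} ⟨a, URI.botp, b⟩
  -- (8b)
  | cross_rng (a b c d : Term) :
      ExtraRule {⟨a, URI.rng, c⟩, ⟨b, URI.rng, d⟩, ⟨c, URI.botc, d⟩} ⟨a, URI.botp, b⟩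

/-- All ρdf⊥¬ deductive rules: the ρdf rules plus the additional rules. -/
def RuleInstN (R : Finset Triple) (τ : Triple) : Prop := RuleInst R τ ∨ ExtraRule R τ

/-- The ρdf⊥¬ rules without the implicit typing rules (5a), (5b). -/
def RuleInstNCore (R : Finset Triple) (τ : Triple) : Prop := RuleInstCore R τ ∨ ExtraRule R τ

/-- One derivation step (including the map rule (1a)). -/
inductive Step (rules : Finset Triple → Triple → Prop) (ok : Triple → Prop) :
    Graph → Graph → Prop where
  | map {G G' : Graph} (μ : Term → Term) (hμ : IsMap μ) (h : mapG μ G' ⊆ G) :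
      Step rules ok G G'
  | sub {G G' : Graph} (h : G' ⊆ G) : Step rules ok G G'
  | rule {G : Graph} (R : Finset Triple) (τ : Triple)
      (hR : R ⊆ G) (hr : rules R τ) (hok : ok τ) : Step rules ok G (insert τ G)

/-- One derivation step without the map rule (1a). -/
inductive StepNM (rules : Finset Triple → Triple → Prop) (ok : Triple → Prop) :
    Graph → Graph → Prop where
  | sub {G G' : Graph} (h : G' ⊆ G) : StepNM rules ok G G'
  | rule {G : Graph} (R : Finset Triple) (τ : Triple)
      (hR : R ⊆ G) (hr : rules R τ) (hok : ok τ) : StepNM rules ok G (insert τ G)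

/-- Derivability (a proof is a finite sequence of graphs related by steps). -/
def Deriv (rules : Finset Triple → Triple → Prop) (ok : Triple → Prop) :
    Graph → Graph → Prop := Relation.ReflTransGen (Step rules ok)

/-- Derivability without the map rule (1a). -/
def DerivNM (rules : Finset Triple → Triple → Prop) (ok : Triple → Prop) :
    Graph → Graph → Prop := Relation.ReflTransGen (StepNM rules ok)

/-- The closure: all triples derivable without rule (1a). -/
def Closure (rules : Finset Triple → Triple → Prop) (ok : Triple → Prop) (G : Graph) :
    Set Triple := {τ | ∃ H : Graph, DerivNM rules ok G H ∧ τ ∈ H}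

/-- ρdf derivability `G ⊢ H`. -/
def DerivRdf : Graph → Graph → Prop := Deriv RuleInst Triple.okRdf

/-- ρdf closure `Cl(G)`. -/
def Cl : Graph → Set Triple := Closure RuleInst Triple.okRdf

/-- ρdf closure computed without the implicit typing rules (5). -/
def ClCore : Graph → Set Triple := Closure RuleInstCore Triple.okRdf

/-- ρdf⊥¬ derivability `G ⊢⊥¬ H`. -/
def DerivN : Graph → Graph → Prop := Deriv RuleInstN Triple.okN

/-- ρdf⊥¬ closure `Cl⊥¬(G)`. -/
def ClN : Graph → Set Triple := Closure RuleInstN Triple.okN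

/-- ρdf⊥¬ closure computed without the implicit typing rules (5). -/
def ClNCore : Graph → Set Triple := Closure RuleInstNCore Triple.okN

/-- `S` is closed under the given rules. -/
def ClosedUnder (rules : Finset Triple → Triple → Prop) (ok : Triple → Prop)
    (S : Set Triple) : Prop :=
  ∀ R τ, rules R τ → ok τ → ↑R ⊆ S → τ ∈ S

/-! ### ρdf⊥¬ semantics -/

/-- A ρdf⊥¬ interpretation (raw data). -/
structure InterpN : Type where
  ΔR : Set Term
  ΔP : Set Term
  ΔC : Set Term
  ΔL : Set Term
  compl : Term → Term
  extPp : Term → Set (Term × Term)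
  extPn : Term → Set (Term × Term)
  extCp : Term → Set Term
  extCn : Term → Set Term
  int : Term → Term

def InterpN.iv (I : InterpN) (e : URI) : Term := I.int (Term.uri e)

/-- `I` is a ρdf⊥¬ interpretation over the vocabulary `V`. -/
structure IsInterpN (I : InterpN) (V : Set Term) : Prop where
  finR : I.ΔR.Finite
  neR : I.ΔR.Nonempty
  finP : I.ΔP.Finite
  neP : I.ΔP.Nonempty
  finC : I.ΔC.Finite
  neC : I.ΔC.Nonempty
  finL : I.ΔL.Finite
  neL : I.ΔL.Nonempty
  hCR : I.ΔC ⊆ I.ΔR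
  hLR : I.ΔL ⊆ I.ΔR
  complR : ∀ t ∈ I.ΔR, I.compl t ∈ I.ΔR
  complP : ∀ t ∈ I.ΔP, I.compl t ∈ I.ΔP
  complC : ∀ t ∈ I.ΔC, I.compl t ∈ I.ΔC
  complInvol : ∀ t ∈ I.ΔR ∪ I.ΔP ∪ I.ΔC, I.compl (I.compl t) = t
  hlit : ∀ n, Term.lit n ∈ V → Term.lit n ∈ I.ΔL
  hPneg : ∀ p ∈ I.ΔP, I.extPp (I.compl p) = I.extPn p
  hCneg : ∀ c ∈ I.ΔC, I.extCp (I.compl c) = I.extCn c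
  hextPp : ∀ p ∈ I.ΔP, I.extPp p ⊆ I.ΔR ×ˢ I.ΔR
  hextPn : ∀ p ∈ I.ΔP, I.extPn p ⊆ I.ΔR ×ˢ I.ΔR
  hextCp : ∀ c ∈ I.ΔC, I.extCp c ⊆ I.ΔR
  hextCn : ∀ c ∈ I.ΔC, I.extCn c ⊆ I.ΔR
  hint : ∀ t ∈ V, ¬ t.isBlank → ¬ t.isStar → I.int t ∈ I.ΔR ∪ I.ΔP
  hintneg : ∀ (b : Bool) (n : ℕ),
    I.int (Term.uri (URI.res (!b) n)) = I.compl (I.int (Term.uri (URI.res b n)))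
  hintlit : ∀ n, I.int (Term.lit n) = Term.lit n
  hintblank : ∀ n, I.int (Term.blank n) ∈ I.ΔR

/-- `I` is a ρdf⊥¬-model of the graph `G`. -/
structure ModelsN (I : InterpN) (G : Graph) : Prop where
  interp : IsInterpN I (botVocT ∪ uni G)
  -- Simple
  simple1 : ∀ τ ∈ G, ¬ τ.s.isStar → ¬ τ.o.isStar →
    I.iv τ.p ∈ I.ΔP ∧ (I.int τ.s, I.int τ.o) ∈ I.extPp (I.iv τ.p)
  simple2 : ∀ τ ∈ G, ∀ (b : Bool) (n : ℕ), τ.o = Term.uri (URI.star b n) →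
    I.iv τ.p ∈ I.ΔP ∧ I.int (Term.uri (URI.res b n)) ∈ I.ΔC ∧
    ∀ y ∈ I.extCp (I.int (Term.uri (URI.res b n))), (I.int τ.s, y) ∈ I.extPp (I.iv τ.p)
  simple3 : ∀ τ ∈ G, ∀ (b : Bool) (n : ℕ), τ.s = Term.uri (URI.star b n) →
    I.iv τ.p ∈ I.ΔP ∧ I.int (Term.uri (URI.res b n)) ∈ I.ΔC ∧
    ∀ x ∈ I.extCp (I.int (Term.uri (URI.res b n))), (x, I.int τ.o) ∈ I.extPp (I.iv τ.p)
  simple4 : ∀ τ ∈ G, ∀ (b : Bool) (n : ℕ), τ.o = Term.uri (URI.star b n) →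
    I.iv τ.p ∈ I.ΔP ∧ I.int (Term.uri (URI.res b n)) ∈ I.ΔC ∧
    ∀ y, (I.int τ.s, y) ∈ I.extPn (I.iv τ.p) → y ∈ I.extCn (I.int (Term.uri (URI.res b n)))
  simple5 : ∀ τ ∈ G, ∀ (b : Bool) (n : ℕ), τ.s = Term.uri (URI.star b n) →
    I.iv τ.p ∈ I.ΔP ∧ I.int (Term.uri (URI.res b n)) ∈ I.ΔC ∧
    ∀ x, (x, I.int τ.o) ∈ I.extPn (I.iv τ.p) → x ∈ I.extCn (I.int (Term.uri (URI.res b n)))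
  -- Subproperty
  sp_trans : ∀ p q r, p ∈ I.ΔP → q ∈ I.ΔP → r ∈ I.ΔP →
    (p, q) ∈ I.extPp (I.iv URI.sp) → (q, r) ∈ I.extPp (I.iv URI.sp) →
    (p, r) ∈ I.extPp (I.iv URI.sp)
  sp_sub : ∀ p q, (p, q) ∈ I.extPp (I.iv URI.sp) →
    p ∈ I.ΔP ∧ q ∈ I.ΔP ∧ I.extPp p ⊆ I.extPp q
  sp_contra : ∀ p q, p ∈ I.ΔP → q ∈ I.ΔP →
    ((p, q) ∈ I.extPp (I.iv URI.sp) ↔ (I.compl q, I.compl p) ∈ I.extPp (I.iv URI.sp))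
  -- Subclass
  sc_trans : ∀ c d e, c ∈ I.ΔC → d ∈ I.ΔC → e ∈ I.ΔC →
    (c, d) ∈ I.extPp (I.iv URI.sc) → (d, e) ∈ I.extPp (I.iv URI.sc) →
    (c, e) ∈ I.extPp (I.iv URI.sc)
  sc_sub : ∀ c d, (c, d) ∈ I.extPp (I.iv URI.sc) →
    c ∈ I.ΔC ∧ d ∈ I.ΔC ∧ I.extCp c ⊆ I.extCp d
  sc_contra : ∀ c d, c ∈ I.ΔC → d ∈ I.ΔC →
    ((c, d) ∈ I.extPp (I.iv URI.sc) ↔ (I.compl d, I.compl c) ∈ I.extPp (I.iv URI.sc))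
  -- Typing I
  typI1 : ∀ x c, c ∈ I.ΔC → (x ∈ I.extCp c ↔ (x, c) ∈ I.extPp (I.iv URI.typ))
  typI2 : ∀ p c x y, (p, c) ∈ I.extPp (I.iv URI.dom) → (x, y) ∈ I.extPp p → x ∈ I.extCp c
  typI3 : ∀ p c x y, (p, c) ∈ I.extPp (I.iv URI.rng) → (x, y) ∈ I.extPp p → y ∈ I.extCp c
  typI4 : ∀ p c x y, (p, c) ∈ I.extPp (I.iv URI.dom) → x ∈ I.extCn c →
    (∃ x', (x', y) ∈ I.extPp p) → (x, y) ∈ I.extPn p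
  typI5 : ∀ p c x y, (p, c) ∈ I.extPp (I.iv URI.rng) → y ∈ I.extCn c →
    (∃ y', (x, y') ∈ I.extPp p) → (x, y) ∈ I.extPn p
  -- Typing II
  typII1 : ∀ e ∈ botVoc, I.iv e ∈ I.ΔP
  typII2 : ∀ p c, (p, c) ∈ I.extPp (I.iv URI.dom) → p ∈ I.ΔP ∧ c ∈ I.ΔC
  typII3 : ∀ p c, (p, c) ∈ I.extPp (I.iv URI.rng) → p ∈ I.ΔP ∧ c ∈ I.ΔC
  typII4 : ∀ x c, (x, c) ∈ I.extPp (I.iv URI.typ) → c ∈ I.ΔC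
  -- Disjointness I
  disjI1 : ∀ c d, (c, d) ∈ I.extPp (I.iv URI.botc) → c ∈ I.ΔC ∧ d ∈ I.ΔC
  disjI2 : ∀ p q, (p, q) ∈ I.extPp (I.iv URI.botp) → p ∈ I.ΔP ∧ q ∈ I.ΔP
  disjI3_symm : ∀ c d, (c, d) ∈ I.extPp (I.iv URI.botc) → (d, c) ∈ I.extPp (I.iv URI.botc)
  disjI3_subtrans : ∀ c d e, (c, d) ∈ I.extPp (I.iv URI.botc) →
    (e, c) ∈ I.extPp (I.iv URI.sc) → (e, d) ∈ I.extPp (I.iv URI.botc)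
  disjI3_exh : ∀ c d, (c, c) ∈ I.extPp (I.iv URI.botc) → d ∈ I.ΔC →
    (c, d) ∈ I.extPp (I.iv URI.botc)
  disjI4_symm : ∀ p q, (p, q) ∈ I.extPp (I.iv URI.botp) → (q, p) ∈ I.extPp (I.iv URI.botp)
  disjI4_subtrans : ∀ p q r, (p, q) ∈ I.extPp (I.iv URI.botp) →
    (r, p) ∈ I.extPp (I.iv URI.sp) → (r, q) ∈ I.extPp (I.iv URI.botp)
  disjI4_exh : ∀ p q, (p, p) ∈ I.extPp (I.iv URI.botp) → q ∈ I.ΔP →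
    (p, q) ∈ I.extPp (I.iv URI.botp)
  -- Disjointness II
  disjII1 : ∀ p q c d, (p, c) ∈ I.extPp (I.iv URI.dom) → (q, d) ∈ I.extPp (I.iv URI.dom) →
    (c, d) ∈ I.extPp (I.iv URI.botc) → (p, q) ∈ I.extPp (I.iv URI.botp)
  disjII2 : ∀ p q c d, (p, c) ∈ I.extPp (I.iv URI.rng) → (q, d) ∈ I.extPp (I.iv URI.rng) →
    (c, d) ∈ I.extPp (I.iv URI.botc) → (p, q) ∈ I.extPp (I.iv URI.botp)
  disjII3 : ∀ c d, c ∈ I.ΔC → d ∈ I.ΔC →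
    ((c, d) ∈ I.extPp (I.iv URI.botc) ↔ (c, I.compl d) ∈ I.extPp (I.iv URI.sc))
  disjII4 : ∀ p q, p ∈ I.ΔP → q ∈ I.ΔP →
    ((p, q) ∈ I.extPp (I.iv URI.botp) ↔ (p, I.compl q) ∈ I.extPp (I.iv URI.sp))

/-- ρdf⊥¬ entailment `G ⊨⊥¬ H`. -/
def EntailsN (G H : Graph) : Prop := ∀ I : InterpN, ModelsN I G → ModelsN I H

/-! ### The canonical model of a ρdf⊥¬ graph -/

def canDR (G : Graph) : Set Term := uni G ∪ negT '' uni G ∪ rhoVocT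

def canDP' (G : Graph) : Set Term :=
  {p | p ∈ uni G ∧ ∃ τ ∈ ClN G,
      Term.uri τ.p = p ∨
      ((τ.p = URI.sp ∨ τ.p = URI.botp) ∧ (τ.s = p ∨ τ.o = p)) ∨
      ((τ.p = URI.dom ∨ τ.p = URI.rng) ∧ τ.s = p)}
    ∪ botVocT

def canDP (G : Graph) : Set Term := canDP' G ∪ negT '' canDP' G

def canDC' (G : Graph) : Set Term :=
  {c | c ∈ uni G ∧ ∃ τ ∈ ClN G,
      (τ.p = URI.typ ∧ τ.o = c) ∨
      ((τ.p = URI.sc ∨ τ.p = URI.botc) ∧ (τ.s = c ∨ τ.o = c)) ∨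
      ((τ.p = URI.dom ∨ τ.p = URI.rng) ∧ τ.o = c) ∨
      (∃ (b : Bool) (n : ℕ),
        (τ.s = Term.uri (URI.star b n) ∨ τ.o = Term.uri (URI.star b n)) ∧
        c = Term.uri (URI.res b n))}

def canDC (G : Graph) : Set Term := canDC' G ∪ negT '' canDC' G

def canDL (G : Graph) : Set Term := {t | t ∈ uni G ∧ t.isLit}

def canExtP (G : Graph) (p : Term) : Set (Term × Term) :=
  {x | ∃ u : URI, p = Term.uri u ∧ (⟨x.1, u, x.2⟩ : Triple) ∈ ClN G}

def canExtC (G : Graph) (c : Term) : Set Term :=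
  {x | x ∈ uni G ∧ (⟨x, URI.typ, c⟩ : Triple) ∈ ClN G}

/-- The canonical interpretation `I_G` of a ρdf⊥¬ graph `G`. -/
def canInterp (G : Graph) : InterpN where
  ΔR := canDR G
  ΔP := canDP G
  ΔC := canDC G
  ΔL := canDL G
  compl := negT
  extPp := canExtP G
  extPn := fun p => canExtP G (negT p)
  extCp := canExtC G
  extCn := fun c => canExtC G (negT c)
  int := id

end Rho
namespace Rho

/-! ### Auxiliary development for the closure theorem -/

/-- The least set containing `G` and closed under the ρdf rules (with okRdf side
condition). -/
inductive ClSet (G : Graph) : Triple → Prop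
  | base {τ : Triple} : τ ∈ G → ClSet G τ
  | rule {R : Finset Triple} {τ : Triple} :
      RuleInst R τ → τ.okRdf → (∀ ρ ∈ R, ClSet G ρ) → ClSet G τ

lemma derivNM_union {rules : Finset Triple → Triple → Prop} {ok : Triple → Prop}
    {G H : Graph} (K : Graph) (h : DerivNM rules ok G H) :
    DerivNM rules ok (G ∪ K) (H ∪ K) := by
  induction h with
  | refl => exact Relation.ReflTransGen.refl
  | tail _ step ih =>
    refine ih.tail ?_
    cases step with
    | sub h => exact StepNM.sub (Finset.union_subset_union h (Finset.Subset.refl K))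
    | rule R τ hR hr hok =>
      rw [Finset.insert_union]
      exact StepNM.rule R τ (hR.trans Finset.subset_union_left) hr hok

lemma derivNM_growth {rules : Finset Triple → Triple → Prop} {ok : Triple → Prop}
    {G H : Graph} (h : DerivNM rules ok G H) :
    DerivNM rules ok G (G ∪ H) := by
  induction h with
  | refl => rw [Finset.union_self]; exact Relation.ReflTransGen.refl
  | tail _ step ih =>
    cases step with
    | sub h =>
      exact ih.tail (StepNM.sub (Finset.union_subset_union (Finset.Subset.refl G) h))
    | rule R τ hR hr hok =>
      rw [Finset.union_insert]
      exact ih.tail (StepNM.rule R τ (hR.trans Finset.subset_union_right) hr hok)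

lemma derivNM_combine {rules : Finset Triple → Triple → Prop} {ok : Triple → Prop}
    {G H₁ H₂ : Graph} (h1 : DerivNM rules ok G H₁) (h2 : DerivNM rules ok G H₂) :
    ∃ K, DerivNM rules ok G K ∧ H₁ ⊆ K ∧ H₂ ⊆ K := by
  refine ⟨H₂ ∪ (G ∪ H₁), ?_, ?_, Finset.subset_union_left⟩
  · have h2' := derivNM_union (G ∪ H₁) h2
    rw [← Finset.union_assoc, Finset.union_self] at h2'
    exact (derivNM_growth h1).trans h2'
  · exact Finset.subset_union_right.trans Finset.subset_union_right

lemma exists_deriv_superset {G : Graph} {R : Finset Triple}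
    (h : ∀ ρ ∈ R, ρ ∈ Cl G) :
    ∃ H, DerivNM RuleInst Triple.okRdf G H ∧ R ⊆ H := by
  classical
  induction R using Finset.induction_on with
  | empty => exact ⟨G, Relation.ReflTransGen.refl, Finset.empty_subset _⟩
  | @insert ρ R hρR ih =>
    obtain ⟨H, hH, hRH⟩ := ih (fun σ hσ => h σ (Finset.mem_insert_of_mem hσ))
    obtain ⟨H', hH', hρH'⟩ := h ρ (Finset.mem_insert_self ρ R)
    obtain ⟨K, hK, h1, h2⟩ := derivNM_combine hH hH'
    exact ⟨K, hK, Finset.insert_subset (h2 hρH') (hRH.trans h1)⟩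

lemma clSet_mem_cl {G : Graph} {τ : Triple} (h : ClSet G τ) : τ ∈ Cl G := by
  induction h with
  | base h => exact ⟨G, Relation.ReflTransGen.refl, h⟩
  | rule hr hok hprem ih =>
    obtain ⟨H, hH, hRH⟩ := exists_deriv_superset ih
    exact ⟨_, hH.tail (StepNM.rule _ _ hRH hr hok), Finset.mem_insert_self _ _⟩

lemma deriv_clSet {G H : Graph} (hd : DerivNM RuleInst Triple.okRdf G H) :
    ∀ σ ∈ H, ClSet G σ := by
  induction hd with
  | refl => exact fun σ h => ClSet.base h
  | tail _ step ih =>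
    cases step with
    | sub h => exact fun σ hσ => ih σ (h hσ)
    | rule R τ' hR hr hok =>
      intro σ hσ
      rcases Finset.mem_insert.1 hσ with rfl | hσ
      · exact ClSet.rule hr hok fun ρ hρ => ih ρ (hR hρ)
      · exact ih σ hσ

lemma mem_cl_clSet {G : Graph} {τ : Triple} (h : τ ∈ Cl G) : ClSet G τ := by
  obtain ⟨H, hd, hτ⟩ := h
  exact deriv_clSet hd τ hτ

lemma clSet_okRdf {G : Graph} (hG : IsRdfGraph G) {τ : Triple} (h : ClSet G τ) :
    τ.okRdf := by
  induction h with
  | base h => exact hG _ h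
  | rule hr hok hprem ih => exact hok

lemma clSet_min {G : Graph} {S : Set Triple} (hGS : ↑G ⊆ S)
    (hcl : ClosedUnder RuleInst Triple.okRdf S) {τ : Triple} (h : ClSet G τ) :
    τ ∈ S := by
  induction h with
  | base h => exact hGS h
  | rule hr hok hprem ih => exact hcl _ _ hr hok fun ρ hρ => ih ρ hρ

/-! ### Quadratic upper bound -/

/-- Subjects and objects of a graph. -/
def SOf (G : Graph) : Finset Term := G.image (fun τ => τ.s) ∪ G.image (fun τ => τ.o)

/-- Subject-object pairs of a graph. -/
def PairsF (G : Graph) : Finset (Term × Term) := G.image (fun τ => (τ.s, τ.o))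

def toURI : Term → URI
  | Term.uri u => u
  | _ => URI.sp

/-- Candidate predicates. -/
def PredsF (G : Graph) : Finset URI := (SOf G).image toURI ∪ G.image (fun τ => τ.p)

/-- Invariant of the triples in the closure. -/
def Inv (G : Graph) (τ : Triple) : Prop :=
  (τ.p ∈ ({URI.sp, URI.sc, URI.typ} : Finset URI) ∧ τ.s ∈ SOf G ∧ τ.o ∈ SOf G) ∨
  ((τ.s, τ.o) ∈ PairsF G ∧ τ.p ∈ PredsF G)

lemma pairs_mem_SO {G : Graph} {a b : Term} (h : (a, b) ∈ PairsF G) :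
    a ∈ SOf G ∧ b ∈ SOf G := by
  obtain ⟨τ, hτ, he⟩ := Finset.mem_image.1 h
  rw [Prod.mk.injEq] at he
  obtain ⟨rfl, rfl⟩ := he
  exact ⟨Finset.mem_union_left _ (Finset.mem_image_of_mem _ hτ),
         Finset.mem_union_right _ (Finset.mem_image_of_mem _ hτ)⟩

lemma inv_s {G : Graph} {s : Term} {p : URI} {o : Term}
    (h : Inv G ⟨s, p, o⟩) : s ∈ SOf G := by
  rcases h with ⟨_, hs, _⟩ | ⟨hp, _⟩
  · exact hs
  · exact (pairs_mem_SO hp).1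

lemma inv_o {G : Graph} {s : Term} {p : URI} {o : Term}
    (h : Inv G ⟨s, p, o⟩) : o ∈ SOf G := by
  rcases h with ⟨_, _, ho⟩ | ⟨hp, _⟩
  · exact ho
  · exact (pairs_mem_SO hp).2

lemma uri_predsF {G : Graph} {u : URI} (h : Term.uri u ∈ SOf G) : u ∈ PredsF G :=
  Finset.mem_union_left _ (Finset.mem_image.2 ⟨_, h, rfl⟩)

lemma clSet_inv {G : Graph} (hG : IsRdfGraph G) {τ : Triple} (h : ClSet G τ) :
    Inv G τ := by
  induction h with
  | base h =>
    exact Or.inr ⟨Finset.mem_image_of_mem _ h,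
      Finset.mem_union_right _ (Finset.mem_image_of_mem _ h)⟩
  | @rule R τ hr hok hprem ih =>
    cases hr with
    | sp_trans a b c =>
      have h1 := ih _ (Finset.mem_insert_self _ _)
      have h2 := ih _ (Finset.mem_insert_of_mem (Finset.mem_singleton_self _))
      exact Or.inl ⟨by simp, inv_s h1, inv_o h2⟩
    | sp_mono d e x y =>
      have m1 : (⟨Term.uri d, URI.sp, Term.uri e⟩ : Triple) ∈
          ({⟨Term.uri d, URI.sp, Term.uri e⟩, ⟨x, d, y⟩} : Finset Triple) :=
        Finset.mem_insert_self _ _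
      have m2 : (⟨x, d, y⟩ : Triple) ∈
          ({⟨Term.uri d, URI.sp, Term.uri e⟩, ⟨x, d, y⟩} : Finset Triple) :=
        Finset.mem_insert_of_mem (Finset.mem_singleton_self _)
      have h1 := ih _ m1
      have h2 := ih _ m2
      have hok1 := clSet_okRdf hG (hprem _ m1)
      rcases h2 with ⟨hp, _, _⟩ | ⟨hpair, _⟩
      · exfalso
        have hd : d ∈ rhoVoc := by
          simp only [Finset.mem_insert, Finset.mem_singleton] at hp
          rcases hp with rfl | rfl | rfl <;> simp [rhoVoc]
        exact hok1.1 hd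
      · exact Or.inr ⟨hpair, uri_predsF (inv_o h1)⟩
    | sc_trans a b c =>
      have h1 := ih _ (Finset.mem_insert_self _ _)
      have h2 := ih _ (Finset.mem_insert_of_mem (Finset.mem_singleton_self _))
      exact Or.inl ⟨by simp, inv_s h1, inv_o h2⟩
    | sc_mono a b x =>
      have h1 := ih _ (Finset.mem_insert_self _ _)
      have h2 := ih _ (Finset.mem_insert_of_mem (Finset.mem_singleton_self _))
      exact Or.inl ⟨by simp, inv_s h2, inv_o h1⟩
    | dom d b x y =>
      have h1 := ih _ (Finset.mem_insert_self _ _)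
      have h2 := ih _ (Finset.mem_insert_of_mem (Finset.mem_singleton_self _))
      exact Or.inl ⟨by simp, inv_s h2, inv_o h1⟩
    | rng d b x y =>
      have h1 := ih _ (Finset.mem_insert_self _ _)
      have h2 := ih _ (Finset.mem_insert_of_mem (Finset.mem_singleton_self _))
      exact Or.inl ⟨by simp, inv_o h2, inv_o h1⟩
    | idom a b x y d =>
      have h1 := ih _ (Finset.mem_insert_self _ _)
      have h3 := ih _ (Finset.mem_insert_of_mem (Finset.mem_insert_of_mem
        (Finset.mem_singleton_self _)))
      exact Or.inl ⟨by simp, inv_s h3, inv_o h1⟩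
    | irng a b x y d =>
      have h1 := ih _ (Finset.mem_insert_self _ _)
      have h3 := ih _ (Finset.mem_insert_of_mem (Finset.mem_insert_of_mem
        (Finset.mem_singleton_self _)))
      exact Or.inl ⟨by simp, inv_o h3, inv_o h1⟩

/-- Candidate finite superset of the closure. -/
def Cand (G : Graph) : Finset Triple :=
  ((({URI.sp, URI.sc, URI.typ} : Finset URI) ×ˢ (SOf G ×ˢ SOf G)).image
      (fun q => (⟨q.2.1, q.1, q.2.2⟩ : Triple))) ∪
  ((PairsF G ×ˢ PredsF G).image (fun q => (⟨q.1.1, q.2, q.1.2⟩ : Triple)))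

lemma inv_mem_cand {G : Graph} {τ : Triple} (h : Inv G τ) : τ ∈ Cand G := by
  rcases h with ⟨hp, hs, ho⟩ | ⟨hpair, hp⟩
  · exact Finset.mem_union_left _ (Finset.mem_image.2
      ⟨(τ.p, τ.s, τ.o), Finset.mem_product.2 ⟨hp, Finset.mem_product.2 ⟨hs, ho⟩⟩, rfl⟩)
  · exact Finset.mem_union_right _ (Finset.mem_image.2
      ⟨((τ.s, τ.o), τ.p), Finset.mem_product.2 ⟨hpair, hp⟩, rfl⟩)

lemma cand_card (G : Graph) : (Cand G).card ≤ 15 * G.card ^ 2 := by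
  have hSO : (SOf G).card ≤ 2 * G.card := by
    calc (SOf G).card ≤ (G.image (fun τ => τ.s)).card + (G.image (fun τ => τ.o)).card :=
          Finset.card_union_le _ _
    _ ≤ G.card + G.card := Nat.add_le_add Finset.card_image_le Finset.card_image_le
    _ = 2 * G.card := by ring
  have hPairs : (PairsF G).card ≤ G.card := Finset.card_image_le
  have hPreds : (PredsF G).card ≤ 3 * G.card := by
    calc (PredsF G).card ≤ ((SOf G).image toURI).card + (G.image (fun τ => τ.p)).card :=
          Finset.card_union_le _ _
    _ ≤ (SOf G).card + G.card := Nat.add_le_add Finset.card_image_le Finset.card_image_le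
    _ ≤ 2 * G.card + G.card := Nat.add_le_add_right hSO _
    _ = 3 * G.card := by ring
  have h3 : ({URI.sp, URI.sc, URI.typ} : Finset URI).card ≤ 3 := by decide
  calc (Cand G).card
      ≤ ((({URI.sp, URI.sc, URI.typ} : Finset URI) ×ˢ (SOf G ×ˢ SOf G)).image
          (fun q => (⟨q.2.1, q.1, q.2.2⟩ : Triple))).card +
        ((PairsF G ×ˢ PredsF G).image (fun q => (⟨q.1.1, q.2, q.1.2⟩ : Triple))).card :=
        Finset.card_union_le _ _
    _ ≤ (({URI.sp, URI.sc, URI.typ} : Finset URI) ×ˢ (SOf G ×ˢ SOf G)).card +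
        (PairsF G ×ˢ PredsF G).card :=
        Nat.add_le_add Finset.card_image_le Finset.card_image_le
    _ = ({URI.sp, URI.sc, URI.typ} : Finset URI).card * ((SOf G).card * (SOf G).card) +
        (PairsF G).card * (PredsF G).card := by
        simp [Finset.card_product]
    _ ≤ 3 * ((2 * G.card) * (2 * G.card)) + G.card * (3 * G.card) := by
        exact Nat.add_le_add
          (Nat.mul_le_mul h3 (Nat.mul_le_mul hSO hSO))
          (Nat.mul_le_mul hPairs hPreds)
    _ = 15 * G.card ^ 2 := by ring

lemma cl_subset_cand {G : Graph} (hG : IsRdfGraph G) : Cl G ⊆ ↑(Cand G) :=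
  fun _ hτ => inv_mem_cand (clSet_inv hG (mem_cl_clSet hτ))

/-! ### The chain family -/

lemma chain_clSet (n : ℕ) (p : ℕ → URI) (hp : ∀ i, p i ∉ rhoVoc) (G : Graph)
    (hGdef : G = Finset.image
        (fun i => (⟨Term.uri (p (i + 1)), URI.sp, Term.uri (p (i + 2))⟩ : Triple))
        (Finset.range n)) :
    ∀ j i, 1 ≤ i → i < j → j ≤ n + 1 →
      ClSet G ⟨Term.uri (p i), URI.sp, Term.uri (p j)⟩ := by
  have hbase : ∀ k, k < n →
      ClSet G ⟨Term.uri (p (k + 1)), URI.sp, Term.uri (p (k + 2))⟩ := fun k hk =>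
    ClSet.base (by rw [hGdef]; exact Finset.mem_image_of_mem _ (Finset.mem_range.2 hk))
  intro j
  induction j with
  | zero => intro i h1 h2 h3; omega
  | succ j ih =>
    intro i h1 h2 h3
    rcases Nat.lt_succ_iff_lt_or_eq.1 h2 with hlt | rfl
    · have hij := ih i h1 hlt (by omega)
      have hj : ClSet G ⟨Term.uri (p j), URI.sp, Term.uri (p (j + 1))⟩ := by
        obtain ⟨k, rfl⟩ : ∃ k, j = k + 1 := ⟨j - 1, by omega⟩
        exact hbase k (by omega)
      refine ClSet.rule
        (RuleInst.sp_trans (Term.uri (p i)) (Term.uri (p j)) (Term.uri (p (j + 1))))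
        ⟨hp i, hp (j + 1)⟩ ?_
      intro ρ hρ
      simp only [Finset.mem_insert, Finset.mem_singleton] at hρ
      rcases hρ with rfl | rfl
      · exact hij
      · exact hj
    · obtain ⟨k, rfl⟩ : ∃ k, i = k + 1 := ⟨i - 1, by omega⟩
      exact hbase k (by omega)



/-- The closure of a ρdf graph is unique (it is the least superset of `G`
closed under the deductive rules), of size O(|G|²), and for the chain family
G_n = {⟨p_i, sp, p_{i+1}⟩ : 1 ≤ i ≤ n} it contains ⟨p_i, sp, p_j⟩ for all
1 ≤ i < j ≤ n+1, hence has size Ω(n²). -/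
theorem rdf_closure_unique_and_quadratic :
    (∀ G : Graph, IsRdfGraph G →
      (↑G ⊆ Cl G ∧ ClosedUnder RuleInst Triple.okRdf (Cl G)) ∧
      ∀ S : Set Triple, ↑G ⊆ S → ClosedUnder RuleInst Triple.okRdf S → Cl G ⊆ S) ∧
    (∃ c : ℕ, ∀ G : Graph, IsRdfGraph G → (Cl G).ncard ≤ c * G.card ^ 2) ∧
    (∀ (n : ℕ) (p : ℕ → URI), Function.Injective p → (∀ i, p i ∉ rhoVoc) →
      ∀ G : Graph,
        G = Finset.image
              (fun i => (⟨Term.uri (p (i + 1)), URI.sp, Term.uri (p (i + 2))⟩ : Triple))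
              (Finset.range n) →
        (∀ i j, 1 ≤ i → i < j → j ≤ n + 1 →
          (⟨Term.uri (p i), URI.sp, Term.uri (p j)⟩ : Triple) ∈ Cl G) ∧
        n * (n + 1) / 2 ≤ (Cl G).ncard) := by
  refine ⟨?_, ⟨15, ?_⟩, ?_⟩
  · intro G hG
    refine ⟨⟨fun τ hτ => clSet_mem_cl (ClSet.base hτ), ?_⟩, ?_⟩
    · intro R τ hr hok hR
      exact clSet_mem_cl (ClSet.rule hr hok fun ρ hρ => mem_cl_clSet (hR hρ))
    · intro S hGS hclosed τ hτ
      exact clSet_min hGS hclosed (mem_cl_clSet hτ)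
  · intro G hG
    have h := Set.ncard_le_ncard (cl_subset_cand hG) (Cand G).finite_toSet
    rw [Set.ncard_coe_finset] at h
    exact h.trans (cand_card G)
  · intro n p hinj hp G hGdef
    have hmem : ∀ i j, 1 ≤ i → i < j → j ≤ n + 1 →
        (⟨Term.uri (p i), URI.sp, Term.uri (p j)⟩ : Triple) ∈ Cl G :=
      fun i j h1 h2 h3 => clSet_mem_cl (chain_clSet n p hp G hGdef j i h1 h2 h3)
    refine ⟨hmem, ?_⟩
    have hG : IsRdfGraph G := by
      intro τ hτ
      rw [hGdef] at hτ
      obtain ⟨i, _, rfl⟩ := Finset.mem_image.1 hτ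
      exact ⟨hp (i + 1), hp (i + 2)⟩
    have hfin : (Cl G).Finite := (Cand G).finite_toSet.subset (cl_subset_cand hG)
    classical
    set D : Finset ((_ : ℕ) × ℕ) := (Finset.range (n + 1)).sigma (fun j => Finset.range j)
      with hD
    set f : ((_ : ℕ) × ℕ) → Triple :=
      fun q => ⟨Term.uri (p (q.2 + 1)), URI.sp, Term.uri (p (q.1 + 1))⟩ with hf
    have hsub : ↑(D.image f) ⊆ Cl G := by
      intro τ hτ
      obtain ⟨q, hq, rfl⟩ := Finset.mem_image.1 hτ
      obtain ⟨j, i⟩ := q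
      simp only [hD, Finset.mem_sigma, Finset.mem_range] at hq
      exact hmem (i + 1) (j + 1) (by omega) (by omega) (by omega)
    have hcard : (D.image f).card = D.card := by
      apply Finset.card_image_of_injOn
      rintro ⟨ja, ia⟩ _ ⟨jb, ib⟩ _ hab
      simp only [hf, Triple.mk.injEq, Term.uri.injEq, and_true, true_and] at hab
      obtain ⟨h1', h2'⟩ := hab
      have e1 := hinj h1'
      have e2 := hinj h2'
      have eia : ia = ib := by omega
      have eja : ja = jb := by omega
      subst eia; subst eja; rfl
    have hDcard : D.card = n * (n + 1) / 2 := by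
      rw [hD, Finset.card_sigma]
      simp only [Finset.card_range]
      rw [Finset.sum_range_id]
      simp [Nat.add_sub_cancel, Nat.mul_comm]
    calc n * (n + 1) / 2 = (D.image f).card := by rw [hcard, hDcard]
    _ ≤ (Cl G).ncard := by
        rw [← Set.ncard_coe_finset]
        exact Set.ncard_le_ncard hsub hfin

end Rho
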